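/- Let u, v be BDDs over variables x₁ < ... < xₙ with u ≠ v, and let ⊛ ∈ {∧, ∨}. Define the product-node arithmetisation ⟦u ∧ v⟧ := ⟦u⟧·⟦v⟧ and ⟦u ∨ v⟧ := ⟦u⟧+⟦v⟧−⟦u⟧·⟦v⟧, and for b ∈ {0,1} let u_b, v_b be the results of partially evaluating the top variable x_i (the highest level among u, v) to b. Then the eBDD s = ⟨x_i, ⟨u₀ ⊛ v₀⟩, ⟨u₁ ⊛ v₁⟩⟩ satisfies ⟦s⟧ = δ_{x_i}⟦⟨u ⊛ v⟩⟧. -/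
import Mathlib


open MvPolynomial

/-- Degree reduction `δ_x`: replaces every power `x^j` (`j ≥ 1`) in each monomial by `x`. -/
noncomputable def deltaRed {V F : Type*} [CommRing F] [DecidableEq V]
    (x : V) (p : MvPolynomial V F) : MvPolynomial V F :=
  p.support.sum fun m => monomial (Finsupp.update m x (min (m x) 1)) (coeff m p)

/-- Partial evaluation `[x := a] p`: substitute the constant `a` for variable `x`. -/
noncomputable def pevalVar {V F : Type*} [CommRing F] [DecidableEq V]
    (x : V) (a : F) (p : MvPolynomial V F) : MvPolynomial V F :=
  aeval (fun y => if y = x then C a else X y) p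

/-- A polynomial is multilinear if every variable has degree at most 1 in every monomial. -/
def Multilinear {V F : Type*} [CommSemiring F] (p : MvPolynomial V F) : Prop :=
  ∀ m ∈ p.support, ∀ x : V, m x ≤ 1

/-- Binary equivalence: `p` and `q` agree on all assignments with values in `{0,1}`. -/
def BinaryEquiv {V F : Type*} [CommSemiring F] (p q : MvPolynomial V F) : Prop :=
  ∀ σ : V → F, (∀ x, σ x = 0 ∨ σ x = 1) → eval σ p = eval σ q

/-- A polynomial is binary if it takes values in `{0,1}` on all `{0,1}` assignments. -/
def BinaryPoly {V F : Type*} [CommSemiring F] (p : MvPolynomial V F) : Prop :=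
  ∀ σ : V → F, (∀ x, σ x = 0 ∨ σ x = 1) → eval σ p = 0 ∨ eval σ p = 1

/-- Syntax of (not necessarily reduced) ordered binary decision diagrams over variables `Fin n`. -/
inductive BDD (n : ℕ) where
  | tru  : BDD n
  | fls  : BDD n
  | node (i : Fin n) (u v : BDD n) : BDD n
deriving DecidableEq

/-- Level of a BDD: `⟨true⟩, ⟨false⟩` have level 0; a node on variable `x_i` has level `i+1`. -/
def BDD.level {n : ℕ} : BDD n → ℕ
  | tru => 0
  | fls => 0
  | node i _ _ => i.val + 1

/-- Well-formedness (reduced, ordered): children are distinct, of lower level and well-formed. -/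
def BDD.wf {n : ℕ} : BDD n → Prop
  | tru => True
  | fls => True
  | node i u v => u ≠ v ∧ u.level ≤ i.val ∧ v.level ≤ i.val ∧ u.wf ∧ v.wf

/-- Arithmetisation of a BDD. -/
noncomputable def BDD.arith {n : ℕ} (F : Type*) [CommRing F] : BDD n → MvPolynomial (Fin n) F
  | tru => 1
  | fls => 0
  | node i u v => (1 - MvPolynomial.X i) * u.arith F + MvPolynomial.X i * v.arith F

/-- Partial evaluation `[x_i := b]` on a BDD: resolves a node on variable `x_i`, leaves
other BDDs unchanged. -/
def BDD.bres {n : ℕ} (i : Fin n) (b : Bool) : BDD n → BDD n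
  | .node j u v => if j = i then (if b then v else u) else .node j u v
  | .tru => .tru
  | .fls => .fls

section Aux
variable {V F : Type*} [CommRing F] [DecidableEq V]

lemma peval_monomial (x : V) (a : F) (m : V →₀ ℕ) (c : F) :
    pevalVar x a (monomial m c) = C a ^ (m x) * monomial (m.erase x) c := by
  unfold pevalVar
  rw [aeval_monomial]
  have h2 : (m.erase x).prod (fun i k => (if i = x then C a else X i) ^ k)
      = (m.erase x).prod (fun i k => X i ^ k) := by
    apply Finsupp.prod_congr
    intro y hy
    have : y ≠ x := fun h => by simp [h, Finsupp.erase_same] at hy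
    simp [this]
  by_cases hx : x ∈ m.support
  · rw [← Finsupp.mul_prod_erase m x _ hx, h2, monomial_eq]
    simp only [algebraMap_eq, if_true, eq_self_iff_true]
    ring
  · have hm0 : m x = 0 := Finsupp.notMem_support_iff.mp hx
    have he : m.erase x = m := by
      ext y; by_cases hy : y = x <;> simp [Finsupp.erase, hy, hm0]
    rw [he, hm0, pow_zero, one_mul, monomial_eq, algebraMap_eq]
    congr 1
    apply Finsupp.prod_congr
    intro y hy
    have : y ≠ x := fun h => by rw [h] at hy; exact hx hy
    simp [this]

lemma key_monomial (x : V) (m : V →₀ ℕ) (c : F) :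
    (1 - X x) * pevalVar x (0:F) (monomial m c) + X x * pevalVar x 1 (monomial m c)
      = monomial (Finsupp.update m x (min (m x) 1)) c := by
  rw [peval_monomial, peval_monomial]
  simp only [map_one, one_pow, one_mul, map_zero]
  rcases Nat.eq_zero_or_pos (m x) with h0 | hpos
  · have he : m.erase x = m := by
      ext y; by_cases hy : y = x <;> simp [Finsupp.erase, hy, h0]
    have hu : Finsupp.update m x (min (m x) 1) = m := by
      ext y; by_cases hy : y = x <;> simp [Finsupp.update, hy, h0]
    rw [hu, he, h0, pow_zero]
    ring
  · have hz : (0:MvPolynomial V F) ^ (m x) = 0 := zero_pow (by omega)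
    have hmin : min (m x) 1 = 1 := Nat.min_eq_right hpos
    rw [hz, hmin]
    have hu : Finsupp.update m x 1 = Finsupp.single x 1 + m.erase x := by
      ext y
      by_cases hy : y = x
      · simp [Finsupp.update, Finsupp.erase, hy]
      · simp only [Finsupp.update, Finsupp.erase, Finsupp.coe_mk, Finsupp.add_apply,
          Finsupp.coe_add, Function.update]
        simp [hy, Finsupp.single_apply]
    have hrhs : (monomial (Finsupp.single x 1 + m.erase x)) c
        = X x * monomial (m.erase x) c := by
      rw [X, monomial_mul, one_mul]
    rw [hu, hrhs]
    ring

lemma deltaRed_eq (x : V) (p : MvPolynomial V F) :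
    deltaRed x p = (1 - X x) * pevalVar x 0 p + X x * pevalVar x 1 p := by
  conv_rhs => rw [p.as_sum]
  unfold pevalVar
  rw [map_sum, map_sum, Finset.mul_sum, Finset.mul_sum, ← Finset.sum_add_distrib]
  unfold deltaRed
  apply Finset.sum_congr rfl
  intro m hm
  exact (key_monomial x m (coeff m p)).symm

lemma pevalVar_mul (x : V) (a : F) (p q : MvPolynomial V F) :
    pevalVar x a (p * q) = pevalVar x a p * pevalVar x a q := map_mul _ _ _
lemma pevalVar_add (x : V) (a : F) (p q : MvPolynomial V F) :
    pevalVar x a (p + q) = pevalVar x a p + pevalVar x a q := map_add _ _ _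
lemma pevalVar_sub (x : V) (a : F) (p q : MvPolynomial V F) :
    pevalVar x a (p - q) = pevalVar x a p - pevalVar x a q := map_sub _ _ _
lemma pevalVar_one (x : V) (a : F) : pevalVar x a (1 : MvPolynomial V F) = 1 := map_one _
lemma pevalVar_zero (x : V) (a : F) : pevalVar x a (0 : MvPolynomial V F) = 0 := map_zero _
lemma pevalVar_X_self (x : V) (a : F) : pevalVar x a (X x) = C a := by
  unfold pevalVar; rw [aeval_X]; simp
lemma pevalVar_X_ne (x y : V) (h : y ≠ x) (a : F) : pevalVar x a (X y) = X y := by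
  unfold pevalVar; rw [aeval_X]; simp [h]

lemma peval_arith_low {n : ℕ} (i : Fin n) (a : F) (u : BDD n) (hu : u.wf)
    (hl : u.level ≤ i.val) : pevalVar i a (u.arith F) = u.arith F := by
  induction u with
  | tru => simpa [BDD.arith] using pevalVar_one (F := F) i a
  | fls => simpa [BDD.arith] using pevalVar_zero (F := F) i a
  | node j u' v' ihu ihv =>
    obtain ⟨_, h1, h2, hw1, hw2⟩ := hu
    have hj : j ≠ i := by
      intro h; subst h; simp [BDD.level] at hl
    have hji : (j : Fin n) ≠ i := hj
    simp only [BDD.arith, pevalVar_add, pevalVar_mul, pevalVar_sub, pevalVar_one]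
    rw [pevalVar_X_ne i j hj, ihu hw1 (by simp [BDD.level] at hl; omega),
        ihv hw2 (by simp [BDD.level] at hl; omega)]

lemma peval_arith_bres {n : ℕ} (i : Fin n) (b : Bool) (u : BDD n) (hu : u.wf)
    (hl : u.level ≤ i.val + 1) :
    pevalVar i (if b then (1:F) else 0) (u.arith F) = (u.bres i b).arith F := by
  cases u with
  | tru => simp [BDD.bres, BDD.arith, pevalVar_one]
  | fls => simp [BDD.bres, BDD.arith, pevalVar_zero]
  | node j u' v' =>
    obtain ⟨_, h1, h2, hw1, hw2⟩ := hu
    by_cases hj : j = i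
    · subst hj
      simp only [BDD.arith, pevalVar_add, pevalVar_mul, pevalVar_sub, pevalVar_one,
        pevalVar_X_self, peval_arith_low j _ u' hw1 h1, peval_arith_low j _ v' hw2 h2,
        BDD.bres, if_pos rfl]
      cases b <;> simp
    · have hl' : (BDD.node j u' v').level ≤ i.val := by
        simp only [BDD.level] at hl ⊢
        have : j.val ≠ i.val := fun h => hj (Fin.ext h)
        omega
      rw [peval_arith_low i _ (BDD.node j u' v') ⟨‹_›, h1, h2, hw1, hw2⟩ hl']
      simp [BDD.bres, hj]

end Aux

/-- for BDDs `u ≠ v` with top variable `x_i` (i.e. `max(level u, level v) =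
i+1`), the eBDD `⟨x_i, ⟨u₀ ⊛ v₀⟩, ⟨u₁ ⊛ v₁⟩⟩` has arithmetisation `δ_{x_i}⟦⟨u ⊛ v⟩⟧`, for
both `⊛ = ∧` (product arithmetisation `p·q`) and `⊛ = ∨` (arithmetisation `p+q−p·q`). -/
theorem ebdd_product_node_delta {q : ℕ} [Fact q.Prime] {n : ℕ}
    (u v : BDD n) (hu : u.wf) (hv : v.wf) (huv : u ≠ v)
    (i : Fin n) (hi : max u.level v.level = i.val + 1) :
    ((1 - MvPolynomial.X i) *
        ((u.bres i false).arith (ZMod q) * (v.bres i false).arith (ZMod q)) +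
      MvPolynomial.X i *
        ((u.bres i true).arith (ZMod q) * (v.bres i true).arith (ZMod q))
      = deltaRed i (u.arith (ZMod q) * v.arith (ZMod q))) ∧
    ((1 - MvPolynomial.X i) *
        ((u.bres i false).arith (ZMod q) + (v.bres i false).arith (ZMod q) -
          (u.bres i false).arith (ZMod q) * (v.bres i false).arith (ZMod q)) +
      MvPolynomial.X i *
        ((u.bres i true).arith (ZMod q) + (v.bres i true).arith (ZMod q) -
          (u.bres i true).arith (ZMod q) * (v.bres i true).arith (ZMod q))
      = deltaRed i (u.arith (ZMod q) + v.arith (ZMod q) -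
          u.arith (ZMod q) * v.arith (ZMod q))) := by
  have hul : u.level ≤ i.val + 1 := le_of_le_of_eq (le_max_left _ _) hi
  have hvl : v.level ≤ i.val + 1 := le_of_le_of_eq (le_max_right _ _) hi
  have hu0 : pevalVar i (0 : ZMod q) (u.arith (ZMod q)) = (u.bres i false).arith (ZMod q) := by
    simpa using peval_arith_bres (F := ZMod q) i false u hu hul
  have hu1 : pevalVar i (1 : ZMod q) (u.arith (ZMod q)) = (u.bres i true).arith (ZMod q) := by
    simpa using peval_arith_bres (F := ZMod q) i true u hu hul
  have hv0 : pevalVar i (0 : ZMod q) (v.arith (ZMod q)) = (v.bres i false).arith (ZMod q) := by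
    simpa using peval_arith_bres (F := ZMod q) i false v hv hvl
  have hv1 : pevalVar i (1 : ZMod q) (v.arith (ZMod q)) = (v.bres i true).arith (ZMod q) := by
    simpa using peval_arith_bres (F := ZMod q) i true v hv hvl
  constructor
  · rw [deltaRed_eq, pevalVar_mul, pevalVar_mul, hu0, hu1, hv0, hv1]
  · rw [deltaRed_eq, pevalVar_sub, pevalVar_sub, pevalVar_add, pevalVar_add,
      pevalVar_mul, pevalVar_mul, hu0, hu1, hv0, hv1]
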